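/- Let V be a finite-dimensional real vector space equipped with a quadratic form Q, and let Q₂ denote the standard positive-definite quadratic form (x, y) ↦ x² + y² on ℝ². For any vectors t ∈ V and v ∈ ℝ², the element t ⊗ (e₁ · e₂) + 1 ⊗ ι(v) of the tensor product algebra CliffordAlgebra(−Q) ⊗[ℝ] CliffordAlgebra(Q₂) — where e₁ and e₂ are the images under the canonical map ι of the standard basis vectors of ℝ², and t is taken under the canonical map ι : V → CliffordAlgebra(−Q) — squares to (Q(t) + Q₂(v)) · 1. -/

import Mathlib

/-! `f = e₁ e₂` squares to `-1` and anticommutes with every `ι v`, so in the square of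
`ι t ⊗ f + 1 ⊗ ι v` the cross terms cancel, leaving `(-Q t) ⊗ (-1) + 1 ⊗ Q₂ v`. -/

open scoped TensorProduct
open CliffordAlgebra

/-- The standard positive-definite quadratic form `(x, y) ↦ x² + y²` on `ℝ²`. -/
noncomputable def Q₂ : QuadraticForm ℝ (ℝ × ℝ) :=
  QuadraticMap.prod QuadraticMap.sq QuadraticMap.sq

lemma Q₂_apply (v : ℝ × ℝ) : Q₂ v = v.1 ^ 2 + v.2 ^ 2 := by
  simp [Q₂, QuadraticMap.prod_apply, QuadraticMap.sq, sq]

namespace Algebra.TensorProduct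

variable {R A B : Type*} [CommRing R] [Ring A] [Ring B] [Algebra R A] [Algebra R B]

theorem tmul_add_one_tmul_mul_self (a : A) {f w : B} (h : f * w + w * f = 0) :
    (a ⊗ₜ[R] f + 1 ⊗ₜ w) * (a ⊗ₜ f + 1 ⊗ₜ w) = (a * a) ⊗ₜ (f * f) + 1 ⊗ₜ (w * w) := by
  have hcross : a ⊗ₜ[R] (f * w) + a ⊗ₜ (w * f) = 0 := by
    rw [← TensorProduct.tmul_add, h, TensorProduct.tmul_zero]
  simp only [mul_add, add_mul, tmul_mul_tmul, one_mul, mul_one]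
  linear_combination (norm := abel) hcross

theorem tmul_add_one_tmul_mul_self_eq_algebraMap {a : A} {f w : B} {α β : R}
    (ha : a * a = algebraMap R A α) (hf : f * f = -1) (hw : w * w = algebraMap R B β)
    (h : f * w + w * f = 0) :
    (a ⊗ₜ[R] f + 1 ⊗ₜ w) * (a ⊗ₜ f + 1 ⊗ₜ w) = algebraMap R (A ⊗[R] B) (β - α) := by
  rw [tmul_add_one_tmul_mul_self a h, ha, hf, hw, TensorProduct.tmul_neg, ← algebraMap_apply,
    ← algebraMap_apply', map_sub]
  abel

end Algebra.TensorProduct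

namespace CliffordAlgebra

variable {R M : Type*} [CommRing R] [AddCommGroup M] [Module R M] {Q : QuadraticForm R M}
  {x y : M}

theorem ι_mul_ι_mul_self_of_isOrtho (h : Q.IsOrtho x y) :
    ι Q x * ι Q y * (ι Q x * ι Q y) = -algebraMap R _ (Q x * Q y) := by
  rw [mul_assoc, ι_mul_ι_mul_of_isOrtho _ h.symm, ι_sq_scalar Q y, mul_neg, ← mul_assoc,
    ι_sq_scalar, ← map_mul]

theorem ι_mul_ι_mul_ι_add_ι_mul_ι_mul_ι_of_isOrtho (h : Q.IsOrtho x y) (a b : R) :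
    ι Q x * ι Q y * ι Q (a • x + b • y) + ι Q (a • x + b • y) * (ι Q x * ι Q y) = 0 := by
  have hx : ι Q x * ι Q y * ι Q x = -(ι Q x * (ι Q x * ι Q y)) := by
    rw [mul_assoc, ι_mul_ι_comm_of_isOrtho h.symm, mul_neg]
  have hy : ι Q x * ι Q y * ι Q y = -(ι Q y * (ι Q x * ι Q y)) := by
    rw [← mul_assoc (ι Q y), ι_mul_ι_comm_of_isOrtho h.symm, neg_mul, neg_neg]
  simp only [map_add, map_smul, mul_add, add_mul, mul_smul_comm, smul_mul_assoc, hx, hy]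
  module

end CliffordAlgebra

theorem square_of_twisting_element_general
    (V : Type*) [AddCommGroup V] [Module ℝ V]
    (Q : QuadraticForm ℝ V) (t : V) (v : ℝ × ℝ) :
    let e₁ : CliffordAlgebra Q₂ := ι Q₂ ((1 : ℝ), (0 : ℝ))
    let e₂ : CliffordAlgebra Q₂ := ι Q₂ ((0 : ℝ), (1 : ℝ))
    let x : CliffordAlgebra (-Q) ⊗[ℝ] CliffordAlgebra Q₂ :=
      (ι (-Q) t) ⊗ₜ[ℝ] (e₁ * e₂) + 1 ⊗ₜ[ℝ] (ι Q₂ v)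
    x * x = algebraMap ℝ (CliffordAlgebra (-Q) ⊗[ℝ] CliffordAlgebra Q₂) (Q t + Q₂ v) := by
  intro e₁ e₂ x
  have hortho : Q₂.IsOrtho ((1 : ℝ), (0 : ℝ)) ((0 : ℝ), (1 : ℝ)) := by
    simp [QuadraticMap.IsOrtho, Q₂_apply]
  have hv : v.1 • ((1 : ℝ), (0 : ℝ)) + v.2 • ((0 : ℝ), (1 : ℝ)) = v := by ext <;> simp
  have hf : e₁ * e₂ * (e₁ * e₂) = -1 := by
    rw [ι_mul_ι_mul_self_of_isOrtho hortho]; simp [Q₂_apply]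
  have hfv : e₁ * e₂ * ι Q₂ v + ι Q₂ v * (e₁ * e₂) = 0 := by
    simpa only [hv] using ι_mul_ι_mul_ι_add_ι_mul_ι_mul_ι_of_isOrtho hortho v.1 v.2
  rw [Algebra.TensorProduct.tmul_add_one_tmul_mul_self_eq_algebraMap (ι_sq_scalar _ t) hf
    (ι_sq_scalar _ v) hfv, neg_apply, sub_neg_eq_add, add_comm]

/-- For `t ∈ V` and `v ∈ ℝ²`, the element `t ⊗ (e₁ e₂) + 1 ⊗ ι(v)` of
`CliffordAlgebra (−Q) ⊗[ℝ] CliffordAlgebra Q₂` squares to `(Q t + Q₂ v) • 1`. -/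
theorem square_of_twisting_element
    (V : Type*) [AddCommGroup V] [Module ℝ V] [FiniteDimensional ℝ V]
    (Q : QuadraticForm ℝ V) (t : V) (v : ℝ × ℝ) :
    let e₁ : CliffordAlgebra Q₂ := ι Q₂ ((1 : ℝ), (0 : ℝ))
    let e₂ : CliffordAlgebra Q₂ := ι Q₂ ((0 : ℝ), (1 : ℝ))
    let x : CliffordAlgebra (-Q) ⊗[ℝ] CliffordAlgebra Q₂ :=
      (ι (-Q) t) ⊗ₜ[ℝ] (e₁ * e₂) + 1 ⊗ₜ[ℝ] (ι Q₂ v)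
    x * x = algebraMap ℝ (CliffordAlgebra (-Q) ⊗[ℝ] CliffordAlgebra Q₂) (Q t + Q₂ v) :=
  square_of_twisting_element_general V Q t v
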